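/- Let H be a complex Hilbert space and E a POVM on the Borel σ-algebra of ℝ with values in B(H). Suppose ω : B(H) → ℂ is a state (a linear functional with ω(a) ≥ 0 for every positive a ∈ B(H) and ω(1) = 1) which is invariant under translations of E, i.e. ω(E(X + t)) = ω(E(X)) for every Borel X ⊆ ℝ and every t ∈ ℝ. Then ω(E(X)) = 0 for every bounded Borel set X ⊆ ℝ. -/
import Mathlib


local notation "⟪" x ", " y "⟫_ℂ" => @inner ℂ _ _ x y

/-- Let `E` be a POVM on `Bor(ℝ)` with values in `B(H)` (positivity,
normalisation, and countable additivity in the weak operator topology) and `ω` a state on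
`B(H)` (a positive normalised linear functional) which is invariant under translations of
`E`.  Then `ω (E X) = 0` for every bounded Borel set `X ⊆ ℝ`. -/
theorem stmt9 {H : Type*} [NormedAddCommGroup H] [InnerProductSpace ℂ H] [CompleteSpace H]
    (E : Set ℝ → (H →L[ℂ] H))
    (hEpos : ∀ X : Set ℝ, MeasurableSet X → (E X).IsPositive)
    (hEnorm : E Set.univ = 1)
    (hEadd : ∀ X : ℕ → Set ℝ, (∀ i, MeasurableSet (X i)) →
        Pairwise (Function.onFun Disjoint X) →
        ∀ ψ ψ' : H, HasSum (fun i => ⟪ψ, E (X i) ψ'⟫_ℂ) ⟪ψ, E (⋃ i, X i) ψ'⟫_ℂ)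
    (ω : (H →L[ℂ] H) →ₗ[ℂ] ℂ)
    (hωpos : ∀ a : H →L[ℂ] H, a.IsPositive → 0 ≤ (ω a).re ∧ (ω a).im = 0)
    (hωnorm : ω 1 = 1)
    (hωinv : ∀ X : Set ℝ, MeasurableSet X → ∀ t : ℝ, ω (E ((fun s => s + t) '' X)) = ω (E X)) :
    ∀ X : Set ℝ, MeasurableSet X → Bornology.IsBounded X → ω (E X) = 0 := by
  -- E ∅ = 0
  have hE0 : E ∅ = 0 := by
    ext ψ'
    refine ext_inner_left ℂ fun ψ => ?_
    have h := hEadd (fun _ => ∅) (fun _ => MeasurableSet.empty)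
      (fun i j _ => disjoint_bot_left) ψ ψ'
    simp only [Set.iUnion_empty] at h
    have h1 : Filter.Tendsto (fun _ : ℕ => ⟪ψ, E ∅ ψ'⟫_ℂ) Filter.atTop (nhds 0) :=
      h.summable.tendsto_atTop_zero
    have h2 : ⟪ψ, E ∅ ψ'⟫_ℂ = 0 := tendsto_nhds_unique tendsto_const_nhds h1
    simp [h2]
  -- finite (binary) additivity
  have hadd2 : ∀ A B : Set ℝ, MeasurableSet A → MeasurableSet B → Disjoint A B →
      E (A ∪ B) = E A + E B := by
    intro A B hA hB hAB
    ext ψ'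
    refine ext_inner_left ℂ fun ψ => ?_
    set Y : ℕ → Set ℝ := fun n => if n = 0 then A else if n = 1 then B else ∅ with hY
    have hYm : ∀ i, MeasurableSet (Y i) := by
      intro i
      rcases i with _ | _ | i <;> simp [Y, hA, hB]
    have hYd : Pairwise (Function.onFun Disjoint Y) := by
      intro i j hij
      rcases i with _ | _ | i <;> rcases j with _ | _ | j <;>
        simp_all [Function.onFun, Y, hAB, hAB.symm]
    have hU : (⋃ i, Y i) = A ∪ B := by
      ext x
      simp only [Set.mem_iUnion, Set.mem_union]
      constructor
      · rintro ⟨i, hi⟩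
        rcases i with _ | _ | i <;> simp_all [Y]
      · rintro (h | h)
        exacts [⟨0, by simp [Y, h]⟩, ⟨1, by simp [Y, h]⟩]
    have h := hEadd Y hYm hYd ψ ψ'
    rw [hU] at h
    have hfin : HasSum (fun i => ⟪ψ, E (Y i) ψ'⟫_ℂ)
        (∑ i ∈ ({0, 1} : Finset ℕ), ⟪ψ, E (Y i) ψ'⟫_ℂ) := by
      refine hasSum_sum_of_ne_finset_zero fun i hi => ?_
      rcases i with _ | _ | i <;> simp_all [Y, hE0]
    have hsum : (∑ i ∈ ({0, 1} : Finset ℕ), ⟪ψ, E (Y i) ψ'⟫_ℂ)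
        = ⟪ψ, E A ψ'⟫_ℂ + ⟪ψ, E B ψ'⟫_ℂ := by
      simp [Y]
    have := h.unique hfin
    rw [hsum] at this
    simp [this, inner_add_right]
  -- monotonicity of re ∘ ω ∘ E
  have hmono : ∀ A B : Set ℝ, MeasurableSet A → MeasurableSet B → A ⊆ B →
      (ω (E A)).re ≤ (ω (E B)).re := by
    intro A B hA hB hsub
    have hEB : E B = E A + E (B \ A) := by
      rw [← hadd2 A (B \ A) hA (hB.diff hA) Set.disjoint_sdiff_right, Set.union_diff_cancel hsub]
    have hpos := (hωpos _ (hEpos (B \ A) (hB.diff hA))).1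
    rw [hEB, map_add]
    simp only [Complex.add_re]
    linarith
  set c := ω (E (Set.Ico (0 : ℝ) 1)) with hc
  have hIco : ∀ t : ℝ, ω (E (Set.Ico t (t + 1))) = c := by
    intro t
    have himg : (fun s => s + t) '' Set.Ico (0 : ℝ) 1 = Set.Ico t (t + 1) := by
      rw [Set.image_add_const_Ico, zero_add, add_comm 1 t]
    rw [← himg, hωinv _ measurableSet_Ico t]
  -- ω (E (Ico a (a + n))) = n * c
  have hn : ∀ n : ℕ, ∀ a : ℝ, ω (E (Set.Ico a (a + n))) = n * c := by
    intro n
    induction n with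
    | zero => intro a; simp [hE0]
    | succ n ih =>
      intro a
      have hsplit : Set.Ico a (a + (n + 1 : ℕ)) =
          Set.Ico a (a + n) ∪ Set.Ico (a + n) ((a + n) + 1) := by
        rw [Set.Ico_union_Ico_eq_Ico (le_add_of_nonneg_right (Nat.cast_nonneg n)) (by linarith)]
        push_cast; ring_nf
      rw [hsplit, hadd2 _ _ measurableSet_Ico measurableSet_Ico Set.Ico_disjoint_Ico_same,
        map_add, ih a, hIco (a + n)]
      push_cast; ring
  -- ω (E univ) = 1
  have huniv : (ω (E Set.univ)).re = 1 := by rw [hEnorm, hωnorm]; simp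
  -- c = 0
  have hcre : 0 ≤ c.re := (hωpos _ (hEpos _ measurableSet_Ico)).1
  have hbound : ∀ n : ℕ, (n : ℝ) * c.re ≤ 1 := by
    intro n
    have h1 := hmono (Set.Ico (0 : ℝ) (0 + n)) Set.univ measurableSet_Ico
      MeasurableSet.univ (Set.subset_univ _)
    rw [hn n 0, huniv] at h1
    simpa using h1
  have hc0 : c = 0 := by
    have hre : c.re = 0 := by
      by_contra hne
      have hpos : 0 < c.re := lt_of_le_of_ne hcre (Ne.symm hne)
      obtain ⟨n, hnn⟩ := exists_nat_gt (1 / c.re)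
      have := hbound n
      have h2 : 1 / c.re * c.re < n * c.re := by
        exact mul_lt_mul_of_pos_right hnn hpos
      rw [one_div_mul_cancel hne] at h2
      linarith
    have him : c.im = 0 := (hωpos _ (hEpos _ measurableSet_Ico)).2
    exact Complex.ext hre him
  -- main statement
  intro X hX hXb
  obtain ⟨r, hr⟩ := hXb.subset_ball 0
  have hrpos : Set.Ioo (-r) r ⊆ Set.Ico (-r) (-r + (⌈2 * r⌉₊ : ℕ)) := by
    intro x hx
    constructor
    · exact le_of_lt hx.1
    · have h2r : 2 * r ≤ (⌈2 * r⌉₊ : ℕ) := Nat.le_ceil _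
      have := hx.2
      linarith
  have hsub : X ⊆ Set.Ico (-r) (-r + (⌈2 * r⌉₊ : ℕ)) := by
    intro x hx
    apply hrpos
    have := hr hx
    rw [Real.ball_eq_Ioo] at this
    simpa using this
  have hle := hmono X _ hX measurableSet_Ico hsub
  rw [hn _ (-r)] at hle
  rw [hc0] at hle
  simp only [mul_zero, Complex.zero_re] at hle
  have hge := (hωpos _ (hEpos X hX)).1
  have him := (hωpos _ (hEpos X hX)).2
  exact Complex.ext (le_antisymm hle hge) him
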